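/- Let 𝕂 be a Krein space with fundamental symmetry J and let {f_i : i ∈ I} be a J-frame for 𝕂 with J-frame operator S and canonical J-dual frame {S⁻¹f_i : i ∈ I}. Then for every subset I₁ ⊆ I and every f ∈ 𝕂: Σ_{i∈I₁} σ_i |[f,f_i]|² − Σ_{i∈I} σ_i |[S_{I₁}f, S⁻¹f_i]|² = Σ_{i∈I₁ᶜ} σ_i |[f,f_i]|² − Σ_{i∈I} σ_i |[S_{I₁ᶜ}f, S⁻¹f_i]|², where S_{I₁}f = Σ_{i∈I₁} σ_i [f,f_i] f_i, I₁ᶜ = I ∖ I₁, and σ_i = 1 if i ∈ I₊, σ_i = −1 if i ∈ I₋. -/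

import Mathlib

noncomputable section

open scoped InnerProductSpace ENNReal

attribute [local instance] Classical.propDecidable

namespace JFF

instance : Fact ((1 : ℝ≥0∞) ≤ 2) := ⟨by norm_num⟩

variable {𝕂 : Type*} [NormedAddCommGroup 𝕂] [InnerProductSpace ℂ 𝕂] [CompleteSpace 𝕂]
variable {ι : Type*}

/-- The indefinite inner product `[x, y]` induced by the fundamental symmetry `J`;
with Mathlib's convention (inner products conjugate-linear in the *first* variable),
the paper's `[x, y] = ⟨Jx, y⟩`, which is linear in `x`, is `⟪J y, x⟫_ℂ`. -/
def ip (J : 𝕂 →L[ℂ] 𝕂) (x y : 𝕂) : ℂ := @inner ℂ _ _ (J y) x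

/-- `J` is a fundamental symmetry: a bounded selfadjoint operator with `J ∘ J = 1`. -/
def IsFundSym (J : 𝕂 →L[ℂ] 𝕂) : Prop := IsSelfAdjoint J ∧ J ∘L J = 1

/-- `W` is a `J`-nonnegative subspace. -/
def JNonneg (J : 𝕂 →L[ℂ] 𝕂) (W : Submodule ℂ 𝕂) : Prop :=
  ∀ f ∈ W, 0 ≤ (ip J f f).re

/-- `W` is a `J`-nonpositive subspace. -/
def JNonpos (J : 𝕂 →L[ℂ] 𝕂) (W : Submodule ℂ 𝕂) : Prop :=
  ∀ f ∈ W, (ip J f f).re ≤ 0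

/-- `W` is a `J`-negative subspace. -/
def JNeg (J : 𝕂 →L[ℂ] 𝕂) (W : Submodule ℂ 𝕂) : Prop :=
  ∀ f ∈ W, f ≠ 0 → (ip J f f).re < 0

/-- `W` is uniformly `J`-positive. -/
def UnifJPos (J : 𝕂 →L[ℂ] 𝕂) (W : Submodule ℂ 𝕂) : Prop :=
  ∃ α : ℝ, 0 < α ∧ ∀ f ∈ W, α * ‖f‖ ^ 2 ≤ (ip J f f).re

/-- `W` is uniformly `J`-negative. -/
def UnifJNeg (J : 𝕂 →L[ℂ] 𝕂) (W : Submodule ℂ 𝕂) : Prop :=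
  ∃ α : ℝ, 0 < α ∧ ∀ f ∈ W, (ip J f f).re ≤ -(α * ‖f‖ ^ 2)

/-- `W` is maximal uniformly `J`-positive. -/
def MaxUnifJPos (J : 𝕂 →L[ℂ] 𝕂) (W : Submodule ℂ 𝕂) : Prop :=
  UnifJPos J W ∧ ∀ W' : Submodule ℂ 𝕂, UnifJPos J W' → W ≤ W' → W' = W

/-- `W` is maximal uniformly `J`-negative. -/
def MaxUnifJNeg (J : 𝕂 →L[ℂ] 𝕂) (W : Submodule ℂ 𝕂) : Prop :=
  UnifJNeg J W ∧ ∀ W' : Submodule ℂ 𝕂, UnifJNeg J W' → W ≤ W' → W' = W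

/-- `W` is a maximal `J`-nonnegative subspace. -/
def MaxJNonneg (J : 𝕂 →L[ℂ] 𝕂) (W : Submodule ℂ 𝕂) : Prop :=
  JNonneg J W ∧ ∀ W' : Submodule ℂ 𝕂, JNonneg J W' → W ≤ W' → W' = W

/-- `W` is a maximal `J`-nonpositive subspace. -/
def MaxJNonpos (J : 𝕂 →L[ℂ] 𝕂) (W : Submodule ℂ 𝕂) : Prop :=
  JNonpos J W ∧ ∀ W' : Submodule ℂ 𝕂, JNonpos J W' → W ≤ W' → W' = W

/-- The `J`-orthogonal companion `M^{[⊥]} = {f | [f, m] = 0 ∀ m ∈ M}`. -/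
def JOrth (J : 𝕂 →L[ℂ] 𝕂) (M : Submodule ℂ 𝕂) : Submodule ℂ 𝕂 where
  carrier := {f | ∀ m ∈ M, ip J f m = 0}
  add_mem' := by
    intro a b ha hb m hm
    simp only [ip, inner_add_right] at *
    rw [ha m hm, hb m hm, add_zero]
  zero_mem' := by
    intro m hm
    simp [ip]
  smul_mem' := by
    intro c a ha m hm
    simp only [ip, inner_smul_right] at *
    rw [ha m hm, mul_zero]

/-- A closed subspace is regular (projectively complete) if `𝕂 = M ⊕ M^{[⊥]}`. -/
def Regular (J : 𝕂 →L[ℂ] 𝕂) (M : Submodule ℂ 𝕂) : Prop :=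
  IsClosed (M : Set 𝕂) ∧ IsCompl M (JOrth J M)

/-- The orthogonal projection `π_M` onto `M` as an endomorphism of `𝕂`
(junk value `0` if `M` is not closed). -/
def pr (M : Submodule ℂ 𝕂) : 𝕂 →L[ℂ] 𝕂 :=
  if h : IsClosed (M : Set 𝕂) then
    letI : CompleteSpace M := h.completeSpace_coe
    M.subtypeL ∘L M.orthogonalProjection
  else 0

/-- The Gramian operator `G_M = π_M ∘ J|_M : M → M`
(junk value `0` if `M` is not closed). -/
def gram (J : 𝕂 →L[ℂ] 𝕂) (M : Submodule ℂ 𝕂) : M →L[ℂ] M :=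
  if h : IsClosed (M : Set 𝕂) then
    letI : CompleteSpace M := h.completeSpace_coe
    M.orthogonalProjection ∘L (J ∘L M.subtypeL)
  else 0

/-- The reduced minimum modulus `γ(T) = inf {‖Tx‖ : x ∈ N(T)ᗮ, ‖x‖ = 1}`. -/
def rmm {E F : Type*} [NormedAddCommGroup E] [InnerProductSpace ℂ E]
    [NormedAddCommGroup F] [InnerProductSpace ℂ F] (T : E →L[ℂ] F) : ℝ :=
  sInf ((fun x => ‖T x‖) '' {x | x ∈ (LinearMap.ker (T : E →ₗ[ℂ] F))ᗮ ∧ ‖x‖ = 1})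

/-- `M_S`: the closure of `Σ_{i ∈ S} W i`. -/
def Mspace (W : ι → Submodule ℂ 𝕂) (S : Set ι) : Submodule ℂ 𝕂 :=
  (⨆ i ∈ S, W i).topologicalClosure

/-- The closed span of `{f i : i ∈ S}`. -/
def Mspan (f : ι → 𝕂) (S : Set ι) : Submodule ℂ 𝕂 :=
  (Submodule.span ℂ (f '' S)).topologicalClosure

/-- The subspace of the ℓ²-direct sum consisting of families supported on `S`. -/
def supp (W : ι → Submodule ℂ 𝕂) (S : Set ι) :
    Submodule ℂ (lp (fun i => W i) 2) where
  carrier := {x | ∀ i ∉ S, x i = 0}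
  add_mem' := by
    intro a b ha hb i hi
    have h : (a + b : lp (fun i => W i) 2) i = a i + b i := by
      rw [lp.coeFn_add]; rfl
    rw [h, ha i hi, hb i hi, add_zero]
  zero_mem' := by
    intro i hi
    have h : (0 : lp (fun i => W i) 2) i = 0 := by
      rw [lp.coeFn_zero]; rfl
    rw [h]
  smul_mem' := by
    intro c a ha i hi
    have h : (c • a : lp (fun i => W i) 2) i = c • a i := by
      rw [lp.coeFn_smul]; rfl
    rw [h, ha i hi, smul_zero]

/-- `T` is the synthesis operator of the weighted family of subspaces `(W, v)`:
`T {f_i} = Σ_i v_i f_i` (an unconditionally convergent sum). -/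
def IsSynth (W : ι → Submodule ℂ 𝕂) (v : ι → ℝ)
    (T : lp (fun i => W i) 2 →L[ℂ] 𝕂) : Prop :=
  ∀ x : lp (fun i => W i) 2, HasSum (fun i => (v i : ℂ) • (x i : 𝕂)) (T x)

/-- The range of `T ∘ P_S` where `P_S` is the orthogonal projection onto the
families supported on `S`, i.e. the image under `T` of the families supported on `S`. -/
def rng {W : ι → Submodule ℂ 𝕂} (T : lp (fun i => W i) 2 →L[ℂ] 𝕂)
    (S : Set ι) : Submodule ℂ 𝕂 :=
  (supp W S).map (T : lp (fun i => W i) 2 →ₗ[ℂ] 𝕂)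

/-- `(W, v)` (with the partition `Ipos`, `Ineg` of the index set and synthesis
operator `T`) is a `J`-fusion frame for `𝕂`. -/
structure IsJFusionFrame (J : 𝕂 →L[ℂ] 𝕂) (W : ι → Submodule ℂ 𝕂) (v : ι → ℝ)
    (Ipos Ineg : Set ι) (T : lp (fun i => W i) 2 →L[ℂ] 𝕂) : Prop where
  partition : ∀ i : ι, (i ∈ Ipos ∧ i ∉ Ineg) ∨ (i ∈ Ineg ∧ i ∉ Ipos)
  pos_nonneg : ∀ i ∈ Ipos, JNonneg J (W i)
  neg_neg : ∀ i ∈ Ineg, JNeg J (W i)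
  weights : ∀ i, 0 < v i
  synth : IsSynth W v T
  max_pos : MaxUnifJPos J (rng T Ipos)
  max_neg : MaxUnifJNeg J (rng T Ineg)

/-- `Bm ≤ Am < 0 < Ap ≤ Bp` are `J`-fusion frame bounds for `(W, v)`:
`A_± [f,f] ≤ Σ_{i ∈ I_±} v_i² |[π_{W_i} J f, f]| ≤ B_± [f,f]` for `f ∈ M_±`. -/
def JFusionBounds (J : 𝕂 →L[ℂ] 𝕂) (W : ι → Submodule ℂ 𝕂) (v : ι → ℝ)
    (Ipos Ineg : Set ι) (Bm Am Ap Bp : ℝ) : Prop :=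
  Bm ≤ Am ∧ Am < 0 ∧ 0 < Ap ∧ Ap ≤ Bp ∧
  (∀ f ∈ Mspace W Ipos,
    Summable (fun i : Ipos => v (i : ι) ^ 2 * ‖ip J (pr (W (i : ι)) (J f)) f‖) ∧
    Ap * (ip J f f).re ≤ ∑' i : Ipos, v (i : ι) ^ 2 * ‖ip J (pr (W (i : ι)) (J f)) f‖ ∧
    ∑' i : Ipos, v (i : ι) ^ 2 * ‖ip J (pr (W (i : ι)) (J f)) f‖ ≤ Bp * (ip J f f).re) ∧
  (∀ f ∈ Mspace W Ineg,
    Summable (fun i : Ineg => v (i : ι) ^ 2 * ‖ip J (pr (W (i : ι)) (J f)) f‖) ∧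
    Am * (ip J f f).re ≤ ∑' i : Ineg, v (i : ι) ^ 2 * ‖ip J (pr (W (i : ι)) (J f)) f‖ ∧
    ∑' i : Ineg, v (i : ι) ^ 2 * ‖ip J (pr (W (i : ι)) (J f)) f‖ ≤ Bm * (ip J f f).re)

/-- `(Bm, Am, Ap, Bp)` are the *optimal* `J`-fusion frame bounds. -/
def OptJFusionBounds (J : 𝕂 →L[ℂ] 𝕂) (W : ι → Submodule ℂ 𝕂) (v : ι → ℝ)
    (Ipos Ineg : Set ι) (Bm Am Ap Bp : ℝ) : Prop :=
  JFusionBounds J W v Ipos Ineg Bm Am Ap Bp ∧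
  ∀ Bm' Am' Ap' Bp' : ℝ, JFusionBounds J W v Ipos Ineg Bm' Am' Ap' Bp' →
    Bm' ≤ Bm ∧ Am ≤ Am' ∧ Ap' ≤ Ap ∧ Bp ≤ Bp'

/-- `{f i}` (with the partition `Ipos`, `Ineg` of the index set) is a `J`-frame for `𝕂`. -/
structure IsJFrame (J : 𝕂 →L[ℂ] 𝕂) (f : ι → 𝕂) (Ipos Ineg : Set ι) : Prop where
  partition : ∀ i : ι, (i ∈ Ipos ∧ i ∉ Ineg) ∨ (i ∈ Ineg ∧ i ∉ Ipos)
  nonneg : ∀ i ∈ Ipos, 0 ≤ (ip J (f i) (f i)).re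
  neg : ∀ i ∈ Ineg, (ip J (f i) (f i)).re < 0
  frame : ∃ C D : ℝ, 0 < C ∧ C ≤ D ∧ ∀ g : 𝕂,
    Summable (fun i => ‖@inner ℂ _ _ g (f i)‖ ^ 2) ∧
    C * ‖g‖ ^ 2 ≤ ∑' i, ‖@inner ℂ _ _ g (f i)‖ ^ 2 ∧
    ∑' i, ‖@inner ℂ _ _ g (f i)‖ ^ 2 ≤ D * ‖g‖ ^ 2
  max_pos : MaxUnifJPos J (Mspan f Ipos)
  max_neg : MaxUnifJNeg J (Mspan f Ineg)

/-- `Bm ≤ Am < 0 < Ap ≤ Bp` are `J`-frame bounds for `{f i}`: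
`A_± [g,g] ≤ Σ_{i ∈ I_±} |[g, f i]|² ≤ B_± [g,g]` for `g ∈ M_±`. -/
def JFrameBounds (J : 𝕂 →L[ℂ] 𝕂) (f : ι → 𝕂) (Ipos Ineg : Set ι)
    (Bm Am Ap Bp : ℝ) : Prop :=
  Bm ≤ Am ∧ Am < 0 ∧ 0 < Ap ∧ Ap ≤ Bp ∧
  (∀ g ∈ Mspan f Ipos,
    Summable (fun i : Ipos => ‖ip J g (f (i : ι))‖ ^ 2) ∧
    Ap * (ip J g g).re ≤ ∑' i : Ipos, ‖ip J g (f (i : ι))‖ ^ 2 ∧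
    ∑' i : Ipos, ‖ip J g (f (i : ι))‖ ^ 2 ≤ Bp * (ip J g g).re) ∧
  (∀ g ∈ Mspan f Ineg,
    Summable (fun i : Ineg => ‖ip J g (f (i : ι))‖ ^ 2) ∧
    Am * (ip J g g).re ≤ ∑' i : Ineg, ‖ip J g (f (i : ι))‖ ^ 2 ∧
    ∑' i : Ineg, ‖ip J g (f (i : ι))‖ ^ 2 ≤ Bm * (ip J g g).re)

/-- `(Bm, Am, Ap, Bp)` are the *optimal* `J`-frame bounds. -/
def OptJFrameBounds (J : 𝕂 →L[ℂ] 𝕂) (f : ι → 𝕂) (Ipos Ineg : Set ι)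
    (Bm Am Ap Bp : ℝ) : Prop :=
  JFrameBounds J f Ipos Ineg Bm Am Ap Bp ∧
  ∀ Bm' Am' Ap' Bp' : ℝ, JFrameBounds J f Ipos Ineg Bm' Am' Ap' Bp' →
    Bm' ≤ Bm ∧ Am ≤ Am' ∧ Ap' ≤ Ap ∧ Bp ≤ Bp'

/-!
Write `T₁ = S_{I₁} g` and `T₂ = S_{I₁ᶜ} g`, so that `S g = T₁ + T₂`. Pairing the series of
`S_{I₁} g` with `g` gives `Σ_{i∈I₁} σ_i |[g, f_i]|² = Re [T₁, g]`; pairing the series of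
`S (S⁻¹ h) = h` with `S⁻¹ h` and using that `S⁻¹` is `J`-selfadjoint (as `S` is) gives
`Σ_i σ_i |[h, S⁻¹ f_i]|² = Re [h, S⁻¹ h]`. Since `g = S⁻¹ T₁ + S⁻¹ T₂`, the left side of the
identity is `Re [T₁, S⁻¹ T₂]` and the right side `Re [T₂, S⁻¹ T₁]`, which agree by the
`J`-selfadjointness of `S⁻¹`.
-/

section JSelfAdjoint

variable {E : Type*} [NormedAddCommGroup E] [InnerProductSpace ℂ E] {J : E →L[ℂ] E}

def IsJSelfAdjoint (J A : E →L[ℂ] E) : Prop :=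
  ∀ x y : E, ip J (A x) y = ip J x (A y)

theorem ip_conj_symm [CompleteSpace E] (hJ : IsSelfAdjoint J) (x y : E) :
    starRingEnd ℂ (ip J x y) = ip J y x := by
  rw [ip, inner_conj_symm, ip, ← ContinuousLinearMap.adjoint_inner_left, hJ.adjoint_eq]

theorem ip_add_right (x y z : E) : ip J x (y + z) = ip J x y + ip J x z := by
  simp only [ip, map_add, inner_add_left]

theorem IsJSelfAdjoint.of_rightInverse {S Sinv : E →L[ℂ] E} (hS : IsJSelfAdjoint J S)
    (hinv : Function.RightInverse Sinv S) : IsJSelfAdjoint J Sinv := by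
  intro x y
  conv_rhs => rw [← hinv x]
  rw [hS, hinv y]

variable {κ : Type*} {w : κ → E} {ε : κ → ℝ}

theorem hasSum_ip_of_hasSum {x T : E} (h : HasSum (fun k => ((ε k : ℂ) * ip J x (w k)) • w k) T)
    (y : E) : HasSum (fun k => (ε k : ℂ) * ip J x (w k) * ip J (w k) y) (ip J T y) := by
  simpa only [innerSL_apply_apply, inner_smul_right, ip] using h.mapL (innerSL ℂ (J y))

theorem hasSum_mul_norm_sq_ip [CompleteSpace E] (hJ : IsSelfAdjoint J) {x T : E}
    (h : HasSum (fun k => ((ε k : ℂ) * ip J x (w k)) • w k) T) :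
    HasSum (fun k => ε k * ‖ip J x (w k)‖ ^ 2) (ip J T x).re := by
  convert Complex.hasSum_re (hasSum_ip_of_hasSum h x) using 2 with k
  rw [← ip_conj_symm hJ x (w k), mul_assoc, Complex.mul_conj', ← Complex.ofReal_pow,
    ← Complex.ofReal_mul, Complex.ofReal_re]

theorem isJSelfAdjoint_of_hasSum [CompleteSpace E] (hJ : IsSelfAdjoint J) {A : E →L[ℂ] E}
    (hA : ∀ x, HasSum (fun k => ((ε k : ℂ) * ip J x (w k)) • w k) (A x)) :
    IsJSelfAdjoint J A := by
  intro x y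
  refine (hasSum_ip_of_hasSum (hA x) y).unique ?_
  rw [← ip_conj_symm hJ]
  refine Complex.hasSum_conj'.mpr (hasSum_ip_of_hasSum (hA y) x) |>.congr_fun fun k => ?_
  simp only [map_mul, Complex.conj_ofReal, ip_conj_symm hJ]
  ring

theorem hasSum_mul_norm_sq_ip_inv [CompleteSpace E] (hJ : IsSelfAdjoint J) {S Sinv : E →L[ℂ] E}
    (hS : ∀ x, HasSum (fun k => ((ε k : ℂ) * ip J x (w k)) • w k) (S x))
    (hinv : Function.RightInverse Sinv S) (T : E) :
    HasSum (fun k => ε k * ‖ip J T (Sinv (w k))‖ ^ 2) (ip J T (Sinv T)).re := by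
  have hSinv := (isJSelfAdjoint_of_hasSum hJ hS).of_rightInverse hinv
  simpa only [hSinv T, hinv T] using hasSum_mul_norm_sq_ip hJ (hS (Sinv T))

theorem re_ip_sub_re_ip_inv_eq [CompleteSpace E] (hJ : IsSelfAdjoint J) {R : E →L[ℂ] E}
    (hR : IsJSelfAdjoint J R) {g T₁ T₂ : E} (hg : R (T₁ + T₂) = g) :
    (ip J T₁ g).re - (ip J T₁ (R T₁)).re = (ip J T₂ g).re - (ip J T₂ (R T₂)).re := by
  have hcross : (ip J T₂ (R T₁)).re = (ip J T₁ (R T₂)).re := by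
    rw [← hR, ← ip_conj_symm hJ, Complex.conj_re]
  subst hg
  simp only [map_add, ip_add_right, Complex.add_re]
  linarith

end JSelfAdjoint

theorem stmt13_general {𝕂 : Type*} [NormedAddCommGroup 𝕂] [InnerProductSpace ℂ 𝕂] [CompleteSpace 𝕂]
    {ι : Type*} (J : 𝕂 →L[ℂ] 𝕂) (hJ : IsFundSym J)
    (f : ι → 𝕂) (Ipos : Set ι)
    (S Sinv : 𝕂 →L[ℂ] 𝕂)
    (hS : ∀ g : 𝕂,
      HasSum (fun i : ι => ((if i ∈ Ipos then (1 : ℂ) else -1) * ip J g (f i)) • f i) (S g))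
    (hSinv : Sinv ∘L S = 1 ∧ S ∘L Sinv = 1)
    (SI : Set ι → 𝕂 →L[ℂ] 𝕂)
    (hSI : ∀ (I₁ : Set ι) (g : 𝕂),
      HasSum (fun i : I₁ =>
        ((if (i : ι) ∈ Ipos then (1 : ℂ) else -1) * ip J g (f (i : ι))) • f (i : ι))
        (SI I₁ g)) :
    ∀ (I₁ : Set ι) (g : 𝕂),
      (∑' i : I₁, (if (i : ι) ∈ Ipos then (1 : ℝ) else -1) * ‖ip J g (f (i : ι))‖ ^ 2)
        - ∑' i : ι, (if i ∈ Ipos then (1 : ℝ) else -1) * ‖ip J (SI I₁ g) (Sinv (f i))‖ ^ 2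
      = (∑' i : (I₁ᶜ : Set ι),
            (if (i : ι) ∈ Ipos then (1 : ℝ) else -1) * ‖ip J g (f (i : ι))‖ ^ 2)
        - ∑' i : ι, (if i ∈ Ipos then (1 : ℝ) else -1) * ‖ip J (SI I₁ᶜ g) (Sinv (f i))‖ ^ 2 := by
  intro I₁ g
  have hσ : ∀ i, ((if i ∈ Ipos then (1 : ℝ) else -1 : ℝ) : ℂ) = if i ∈ Ipos then 1 else -1 :=
    fun i => by split_ifs <;> simp
  simp only [← hσ] at hS hSI
  have hinv : Function.RightInverse Sinv S := DFunLike.congr_fun hSinv.2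
  have hSinvJ : IsJSelfAdjoint J Sinv := (isJSelfAdjoint_of_hasSum hJ.1 hS).of_rightInverse hinv
  have hsplit : S g = SI I₁ g + SI I₁ᶜ g := (hS g).unique ((hSI I₁ g).add_compl (hSI I₁ᶜ g))
  rw [(hasSum_mul_norm_sq_ip hJ.1 (hSI I₁ g)).tsum_eq,
    (hasSum_mul_norm_sq_ip hJ.1 (hSI I₁ᶜ g)).tsum_eq,
    (hasSum_mul_norm_sq_ip_inv hJ.1 hS hinv (SI I₁ g)).tsum_eq,
    (hasSum_mul_norm_sq_ip_inv hJ.1 hS hinv (SI I₁ᶜ g)).tsum_eq]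
  exact re_ip_sub_re_ip_inv_eq hJ.1 hSinvJ (hsplit ▸ DFunLike.congr_fun hSinv.1 g)

/-- (Fundamental identity for `J`-frames.) Let `{f i}` be a `J`-frame
with `J`-frame operator `S`, canonical `J`-dual `{S⁻¹ f i}` and partial frame operators
`S_{I₁} g = Σ_{i∈I₁} σ_i [g, f i] f i`. Then for every `I₁ ⊆ I` and every `g ∈ 𝕂`:
`Σ_{i∈I₁} σ_i |[g,f i]|² - Σ_{i∈I} σ_i |[S_{I₁}g, S⁻¹f i]|²
  = Σ_{i∈I₁ᶜ} σ_i |[g,f i]|² - Σ_{i∈I} σ_i |[S_{I₁ᶜ}g, S⁻¹f i]|²`. -/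
theorem stmt13 {𝕂 : Type*} [NormedAddCommGroup 𝕂] [InnerProductSpace ℂ 𝕂] [CompleteSpace 𝕂]
    {ι : Type*} (J : 𝕂 →L[ℂ] 𝕂) (hJ : IsFundSym J)
    (f : ι → 𝕂) (Ipos Ineg : Set ι)
    (hF : IsJFrame J f Ipos Ineg)
    (S Sinv : 𝕂 →L[ℂ] 𝕂)
    (hS : ∀ g : 𝕂,
      HasSum (fun i : ι => ((if i ∈ Ipos then (1 : ℂ) else -1) * ip J g (f i)) • f i) (S g))
    (hSinv : Sinv ∘L S = 1 ∧ S ∘L Sinv = 1)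
    (SI : Set ι → 𝕂 →L[ℂ] 𝕂)
    (hSI : ∀ (I₁ : Set ι) (g : 𝕂),
      HasSum (fun i : I₁ =>
        ((if (i : ι) ∈ Ipos then (1 : ℂ) else -1) * ip J g (f (i : ι))) • f (i : ι))
        (SI I₁ g)) :
    ∀ (I₁ : Set ι) (g : 𝕂),
      (∑' i : I₁, (if (i : ι) ∈ Ipos then (1 : ℝ) else -1) * ‖ip J g (f (i : ι))‖ ^ 2)
        - ∑' i : ι, (if i ∈ Ipos then (1 : ℝ) else -1) * ‖ip J (SI I₁ g) (Sinv (f i))‖ ^ 2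
      = (∑' i : (I₁ᶜ : Set ι),
            (if (i : ι) ∈ Ipos then (1 : ℝ) else -1) * ‖ip J g (f (i : ι))‖ ^ 2)
        - ∑' i : ι, (if i ∈ Ipos then (1 : ℝ) else -1) * ‖ip J (SI I₁ᶜ g) (Sinv (f i))‖ ^ 2 :=
  stmt13_general J hJ f Ipos S Sinv hS hSinv SI hSI

end JFF
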